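/- arXiv:1303.0656 — 2 statements merged into one kernel-verified Lean document; each statement's English description precedes it below -/
import Mathlib

section
/- Let μ be a finite complex Borel measure on [0,1) for which t·|μ|([0,1−t)) is bounded as t → 0⁺. Then the derivation D̄_μ on M[0,1) given by D̄_μ ν = (Xν)*μ is the Banach-space adjoint of the operator T_μ on C₀[0,1) defined by (T_μ h)(t) = t ∫_{[0,1−t)} h(t+s) dμ(s); in particular D̄_μ is weak-star continuous on M[0,1) = C₀[0,1)*. -/
open MeasureTheory Set Filter Topology

noncomputable section

/-- Integral of a complex-valued function against a complex (Borel) measure,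
defined via the Jordan decompositions of the real and imaginary parts. -/
def cInt {X : Type} [MeasurableSpace X] (μ : ComplexMeasure X) (f : X → ℂ) : ℂ :=
  ((∫ x, f x ∂μ.re.toJordanDecomposition.posPart) -
      ∫ x, f x ∂μ.re.toJordanDecomposition.negPart) +
    Complex.I * ((∫ x, f x ∂μ.im.toJordanDecomposition.posPart) -
      ∫ x, f x ∂μ.im.toJordanDecomposition.negPart)

/-- A (positive) measure playing the role of the total variation `|μ|` of a complex
measure `μ` (it is equivalent to the classical total variation: `|μ| ≤ cTV μ ≤ 2|μ|`). -/
def cTV {X : Type} [MeasurableSpace X] (μ : ComplexMeasure X) : Measure X :=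
  μ.re.totalVariation + μ.im.totalVariation

/-- `μ` is concentrated on the set `A`, i.e. `μ` is a measure "on `A`". -/
def ConcOn {X : Type} [MeasurableSpace X] (μ : ComplexMeasure X) (A : Set X) : Prop :=
  ∀ E : Set X, MeasurableSet E → E ⊆ Aᶜ → μ E = 0

/-- `ρ` is the convolution `(Xν) * μ` of the complex measures `ν, μ` on `[0,1)`,
characterized by `ρ E = ∫∫ 1_E (t+s) t dμ(s) dν(t)` for Borel `E ⊆ [0,1)`. -/
def IsXConv (μ ν ρ : ComplexMeasure ℝ) : Prop :=
  ConcOn ρ (Ico 0 1) ∧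
    ∀ E : Set ℝ, MeasurableSet E → E ⊆ Ico (0 : ℝ) 1 →
      ρ E = cInt ν fun t => (t : ℂ) * cInt μ fun s => E.indicator (1 : ℝ → ℂ) (t + s)


/-!
For indicators of Borel subsets of `[0,1)` the adjoint identity `⟨f, (Xν) * μ⟩ = ⟨T_μ f, ν⟩` is
the defining property of `(Xν) * μ`. Both sides are additive in `f` and, by dominated convergence
(applied to each Jordan part), continuous under bounded pointwise convergence, so the identity
passes to bounded simple functions and then to every bounded Borel `f` supported in `[0,1)`, in
particular to the extension of `h` by zero. Because `h 1 = 0` that extension is continuous on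
`[0, ∞)`, so dominated convergence once more shows `T_μ h ∈ C₀[0,1)`; weak-star continuity of
`D̄_μ` is then the weak-star convergence of `ν` tested against `T_μ h`.
-/

namespace MeasureTheory

theorem SignedMeasure.toJordanDecomposition_restrict {X : Type} [MeasurableSpace X]
    (s : SignedMeasure X) {B : Set X} (hB : MeasurableSet B) :
    SignedMeasure.toJordanDecomposition (s.restrict B) =
      { posPart := s.toJordanDecomposition.posPart.restrict B
        negPart := s.toJordanDecomposition.negPart.restrict B
        mutuallySingular := s.toJordanDecomposition.mutuallySingular.mono
          Measure.restrict_le_self Measure.restrict_le_self } := by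
  refine SignedMeasure.toJordanDecomposition_eq ?_
  ext E hE
  rw [VectorMeasure.restrict_apply s hB hE, s.apply_eq_posPart_real_sub_negPart_real (hE.inter hB),
    JordanDecomposition.toSignedMeasure, Measure.toSignedMeasure_sub_apply hE]
  simp [measureReal_def, Measure.restrict_apply hE]

theorem ComplexMeasure.re_restrict {X : Type} [MeasurableSpace X] (σ : ComplexMeasure X)
    {B : Set X} (hB : MeasurableSet B) : ComplexMeasure.re (σ.restrict B) = σ.re.restrict B := by
  ext E hE
  rw [VectorMeasure.restrict_apply _ hB hE]
  exact congrArg Complex.re (VectorMeasure.restrict_apply _ hB hE)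

theorem ComplexMeasure.im_restrict {X : Type} [MeasurableSpace X] (σ : ComplexMeasure X)
    {B : Set X} (hB : MeasurableSet B) : ComplexMeasure.im (σ.restrict B) = σ.im.restrict B := by
  ext E hE
  rw [VectorMeasure.restrict_apply _ hB hE]
  exact congrArg Complex.im (VectorMeasure.restrict_apply _ hB hE)

end MeasureTheory

section CInt

variable {X : Type} [MeasurableSpace X] {σ : ComplexMeasure X} {f g : X → ℂ}

theorem posPart_re_le_cTV (σ : ComplexMeasure X) :
    σ.re.toJordanDecomposition.posPart ≤ cTV σ :=
  Measure.le_add_right (Measure.le_add_right le_rfl)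

theorem negPart_re_le_cTV (σ : ComplexMeasure X) :
    σ.re.toJordanDecomposition.negPart ≤ cTV σ :=
  Measure.le_add_right (Measure.le_add_left le_rfl)

theorem posPart_im_le_cTV (σ : ComplexMeasure X) :
    σ.im.toJordanDecomposition.posPart ≤ cTV σ :=
  Measure.le_add_left (Measure.le_add_right le_rfl)

theorem negPart_im_le_cTV (σ : ComplexMeasure X) :
    σ.im.toJordanDecomposition.negPart ≤ cTV σ :=
  Measure.le_add_left (Measure.le_add_left le_rfl)

instance (σ : ComplexMeasure X) : IsFiniteMeasure (cTV σ) := by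
  unfold cTV; infer_instance

theorem cTV_real_univ (σ : ComplexMeasure X) :
    (cTV σ).real univ = σ.re.toJordanDecomposition.posPart.real univ +
      σ.re.toJordanDecomposition.negPart.real univ +
      (σ.im.toJordanDecomposition.posPart.real univ +
        σ.im.toJordanDecomposition.negPart.real univ) := by
  simp only [cTV, SignedMeasure.totalVariation]
  rw [measureReal_add_apply, measureReal_add_apply, measureReal_add_apply]

theorem cInt_congr_ae (hfg : f =ᵐ[cTV σ] g) : cInt σ f = cInt σ g := by
  unfold cInt
  rw [integral_congr_ae (ae_mono (posPart_re_le_cTV σ) hfg),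
    integral_congr_ae (ae_mono (negPart_re_le_cTV σ) hfg),
    integral_congr_ae (ae_mono (posPart_im_le_cTV σ) hfg),
    integral_congr_ae (ae_mono (negPart_im_le_cTV σ) hfg)]

theorem cInt_add (hf : Integrable f (cTV σ)) (hg : Integrable g (cTV σ)) :
    cInt σ (f + g) = cInt σ f + cInt σ g := by
  unfold cInt
  simp only [Pi.add_apply]
  rw [integral_add (hf.mono_measure (posPart_re_le_cTV σ)) (hg.mono_measure (posPart_re_le_cTV σ)),
    integral_add (hf.mono_measure (negPart_re_le_cTV σ)) (hg.mono_measure (negPart_re_le_cTV σ)),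
    integral_add (hf.mono_measure (posPart_im_le_cTV σ)) (hg.mono_measure (posPart_im_le_cTV σ)),
    integral_add (hf.mono_measure (negPart_im_le_cTV σ)) (hg.mono_measure (negPart_im_le_cTV σ))]
  ring

theorem cInt_const_mul (σ : ComplexMeasure X) (c : ℂ) (f : X → ℂ) :
    cInt σ (fun x => c * f x) = c * cInt σ f := by
  simp only [cInt, integral_const_mul]
  ring

theorem cInt_indicator_one {E : Set X} (hE : MeasurableSet E) :
    cInt σ (E.indicator 1) = σ E := by
  apply Complex.ext
  · simp [cInt, Pi.one_def, integral_indicator_const _ hE]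
    exact (σ.re.apply_eq_posPart_real_sub_negPart_real hE).symm
  · simp [cInt, Pi.one_def, integral_indicator_const _ hE]
    exact (σ.im.apply_eq_posPart_real_sub_negPart_real hE).symm

theorem norm_cInt_le {C : ℝ} (hfC : ∀ᵐ x ∂cTV σ, ‖f x‖ ≤ C) :
    ‖cInt σ f‖ ≤ C * (cTV σ).real univ := by
  have h₁ := norm_integral_le_of_norm_le_const (ae_mono (posPart_re_le_cTV σ) hfC)
  have h₂ := norm_integral_le_of_norm_le_const (ae_mono (negPart_re_le_cTV σ) hfC)
  have h₃ := norm_integral_le_of_norm_le_const (ae_mono (posPart_im_le_cTV σ) hfC)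
  have h₄ := norm_integral_le_of_norm_le_const (ae_mono (negPart_im_le_cTV σ) hfC)
  unfold cInt
  calc _ ≤ ‖(∫ x, f x ∂σ.re.toJordanDecomposition.posPart)‖ +
        ‖(∫ x, f x ∂σ.re.toJordanDecomposition.negPart)‖ +
        (‖(∫ x, f x ∂σ.im.toJordanDecomposition.posPart)‖ +
        ‖(∫ x, f x ∂σ.im.toJordanDecomposition.negPart)‖) := by
        grw [norm_add_le, norm_mul, Complex.norm_I, one_mul, norm_sub_le, norm_sub_le]
    _ ≤ _ := by rw [cTV_real_univ]; linarith

theorem tendsto_cInt_of_dominated {ι : Type*} {l : Filter ι} [l.IsCountablyGenerated]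
    {F : ι → X → ℂ} (C : ℝ) (hF_meas : ∀ᶠ i in l, AEStronglyMeasurable (F i) (cTV σ))
    (h_bound : ∀ᶠ i in l, ∀ᵐ x ∂cTV σ, ‖F i x‖ ≤ C)
    (h_lim : ∀ᵐ x ∂cTV σ, Tendsto (fun i => F i x) l (𝓝 (f x))) :
    Tendsto (fun i => cInt σ (F i)) l (𝓝 (cInt σ f)) := by
  have key : ∀ m ≤ cTV σ, Tendsto (fun i => ∫ x, F i x ∂m) l (𝓝 (∫ x, f x ∂m)) :=
    fun m hm => tendsto_integral_filter_of_dominated_convergence (fun _ => C)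
      (hF_meas.mono fun _ hi => hi.mono_measure hm) (h_bound.mono fun _ hi => ae_mono hm hi)
      ((integrable_const C).mono_measure hm) (ae_mono hm h_lim)
  exact ((key _ (posPart_re_le_cTV σ)).sub (key _ (negPart_re_le_cTV σ))).add
    (tendsto_const_nhds.mul ((key _ (posPart_im_le_cTV σ)).sub (key _ (negPart_im_le_cTV σ))))

theorem StronglyMeasurable.cInt_prod_right {Y : Type} [MeasurableSpace Y] {K : Y → X → ℂ}
    (hK : StronglyMeasurable (Function.uncurry K)) :
    StronglyMeasurable (fun y => cInt σ (K y)) :=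
  ((hK.integral_prod_right'.sub hK.integral_prod_right').add
    (stronglyMeasurable_const.mul (hK.integral_prod_right'.sub hK.integral_prod_right')))

theorem cInt_restrict (σ : ComplexMeasure X) {B : Set X} (hB : MeasurableSet B) (f : X → ℂ) :
    cInt (σ.restrict B) f = cInt σ (B.indicator f) := by
  simp only [cInt, ComplexMeasure.re_restrict σ hB, ComplexMeasure.im_restrict σ hB,
    SignedMeasure.toJordanDecomposition_restrict _ hB, integral_indicator hB]

theorem cTV_restrict (σ : ComplexMeasure X) {B : Set X} (hB : MeasurableSet B) :
    cTV (σ.restrict B) = (cTV σ).restrict B := by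
  simp only [cTV, SignedMeasure.totalVariation, ComplexMeasure.re_restrict σ hB,
    ComplexMeasure.im_restrict σ hB, SignedMeasure.toJordanDecomposition_restrict _ hB,
    Measure.restrict_add]

theorem ConcOn.restrict_compl_eq_zero {A : Set X} (h : ConcOn σ A) (hA : MeasurableSet A) :
    σ.restrict Aᶜ = 0 := by
  ext E hE
  rw [VectorMeasure.restrict_apply _ hA.compl hE]
  exact h _ (hE.inter hA.compl) inter_subset_right

theorem ConcOn.ae_mem {A : Set X} (h : ConcOn σ A) (hA : MeasurableSet A) :
    ∀ᵐ x ∂cTV σ, x ∈ A := by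
  change A ∈ ae (cTV σ)
  rw [mem_ae_iff, ← Measure.restrict_apply_univ, ← cTV_restrict σ hA.compl,
    h.restrict_compl_eq_zero hA, cTV, map_zero, map_zero, SignedMeasure.totalVariation_zero,
    add_zero, Measure.coe_zero, Pi.zero_apply]

theorem integrable_cTV_of_norm_le (σ : ComplexMeasure X) {C : ℝ} (hf : Measurable f)
    (hfC : ∀ x, ‖f x‖ ≤ C) : Integrable f (cTV σ) :=
  .of_bound hf.aestronglyMeasurable C (ae_of_all _ hfC)

end CInt

-- The paper's `T_μ`, acting on functions already extended by zero outside `[0,1)`.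
def xCorr (μ : ComplexMeasure ℝ) (f : ℝ → ℂ) (t : ℝ) : ℂ :=
  t * cInt μ fun s => f (t + s)

section XCorr

variable {μ ν ρ : ComplexMeasure ℝ} {f g : ℝ → ℂ} {C : ℝ}

theorem stronglyMeasurable_xCorr (hf : Measurable f) : StronglyMeasurable (xCorr μ f) :=
  Complex.measurable_ofReal.stronglyMeasurable.mul
    (StronglyMeasurable.cInt_prod_right (K := fun t s => f (t + s))
      (hf.comp measurable_add).stronglyMeasurable)

theorem norm_xCorr_le (hfC : ∀ x, ‖f x‖ ≤ C) {t : ℝ} (ht : t ∈ Ico (0 : ℝ) 1) :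
    ‖xCorr μ f t‖ ≤ C * (cTV μ).real univ := by
  rw [xCorr, norm_mul, Complex.norm_real, Real.norm_of_nonneg ht.1]
  exact (mul_le_of_le_one_left (norm_nonneg _) ht.2.le).trans
    (norm_cInt_le (ae_of_all _ fun s => hfC (t + s)))

theorem integrable_xCorr (hν : ConcOn ν (Ico 0 1)) (hf : Measurable f)
    (hfC : ∀ x, ‖f x‖ ≤ C) : Integrable (xCorr μ f) (cTV ν) :=
  .of_bound (stronglyMeasurable_xCorr hf).aestronglyMeasurable _
    ((hν.ae_mem measurableSet_Ico).mono fun _ ht => norm_xCorr_le hfC ht)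

theorem xCorr_add (hf : Measurable f) (hfC : ∀ x, ‖f x‖ ≤ C) (hg : Measurable g)
    (hgC : ∀ x, ‖g x‖ ≤ C) (t : ℝ) : xCorr μ (f + g) t = xCorr μ f t + xCorr μ g t := by
  rw [xCorr, xCorr, xCorr, ← mul_add, ← cInt_add]
  · rfl
  · exact integrable_cTV_of_norm_le μ (hf.comp (measurable_const_add t)) fun s => hfC (t + s)
  · exact integrable_cTV_of_norm_le μ (hg.comp (measurable_const_add t)) fun s => hgC (t + s)

theorem tendsto_xCorr {F : ℕ → ℝ → ℂ} (hF : ∀ n, Measurable (F n))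
    (hFC : ∀ n x, ‖F n x‖ ≤ C) (hFf : ∀ x, Tendsto (fun n => F n x) atTop (𝓝 (f x))) (t : ℝ) :
    Tendsto (fun n => xCorr μ (F n) t) atTop (𝓝 (xCorr μ f t)) :=
  tendsto_const_nhds.mul <| tendsto_cInt_of_dominated C
    (.of_forall fun n => ((hF n).comp (measurable_const_add t)).aestronglyMeasurable)
    (.of_forall fun n => ae_of_all _ fun s => hFC n (t + s))
    (ae_of_all _ fun s => hFf (t + s))

end XCorr

section Adjoint

variable {μ ν ρ : ComplexMeasure ℝ} {C : ℝ}

theorem cInt_indicator_const_eq_cInt_xCorr (hρ : IsXConv μ ν ρ) {E : Set ℝ}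
    (hE : MeasurableSet E) (hEA : E ⊆ Ico 0 1) (c : ℂ) :
    cInt ρ (E.indicator fun _ => c) = cInt ν (xCorr μ (E.indicator fun _ => c)) := by
  have hind : (E.indicator fun _ => c) = fun x => c * E.indicator 1 x := by
    ext x; by_cases hx : x ∈ E <;> simp [hx]
  calc cInt ρ (E.indicator fun _ => c) = c * ρ E := by
        rw [hind, cInt_const_mul, cInt_indicator_one hE]
    _ = cInt ν fun t => c * ((t : ℂ) * cInt μ fun s => E.indicator 1 (t + s)) := by
        rw [hρ.2 E hE hEA, cInt_const_mul]
    _ = cInt ν (xCorr μ (E.indicator fun _ => c)) := by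
        rw [hind]
        congr 1; funext t
        rw [xCorr, cInt_const_mul]
        ring

theorem cInt_add_eq_cInt_xCorr (hν : ConcOn ν (Ico 0 1)) {f g : ℝ → ℂ}
    (hf : Measurable f) (hfC : ∀ x, ‖f x‖ ≤ C) (hg : Measurable g) (hgC : ∀ x, ‖g x‖ ≤ C)
    (hfρ : cInt ρ f = cInt ν (xCorr μ f)) (hgρ : cInt ρ g = cInt ν (xCorr μ g)) :
    cInt ρ (f + g) = cInt ν (xCorr μ (f + g)) := by
  rw [cInt_add (integrable_cTV_of_norm_le ρ hf hfC) (integrable_cTV_of_norm_le ρ hg hgC),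
    funext (xCorr_add hf hfC hg hgC), ← Pi.add_def,
    cInt_add (integrable_xCorr hν hf hfC) (integrable_xCorr hν hg hgC), hfρ, hgρ]

theorem cInt_eq_cInt_xCorr_of_tendsto (hν : ConcOn ν (Ico 0 1)) {F : ℕ → ℝ → ℂ} {f : ℝ → ℂ}
    (hF : ∀ n, Measurable (F n)) (hFC : ∀ n x, ‖F n x‖ ≤ C)
    (hFf : ∀ x, Tendsto (fun n => F n x) atTop (𝓝 (f x)))
    (hFρ : ∀ n, cInt ρ (F n) = cInt ν (xCorr μ (F n))) :
    cInt ρ f = cInt ν (xCorr μ f) := by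
  have hρ_lim : Tendsto (fun n => cInt ρ (F n)) atTop (𝓝 (cInt ρ f)) :=
    tendsto_cInt_of_dominated C (.of_forall fun n => (hF n).aestronglyMeasurable)
      (.of_forall fun n => ae_of_all _ (hFC n)) (ae_of_all _ hFf)
  have hν_lim : Tendsto (fun n => cInt ν (xCorr μ (F n))) atTop (𝓝 (cInt ν (xCorr μ f))) :=
    tendsto_cInt_of_dominated _
      (.of_forall fun n => (stronglyMeasurable_xCorr (hF n)).aestronglyMeasurable)
      (.of_forall fun n => (hν.ae_mem measurableSet_Ico).mono fun _ ht => norm_xCorr_le (hFC n) ht)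
      (ae_of_all _ (tendsto_xCorr hF hFC hFf))
  exact tendsto_nhds_unique hρ_lim (by simpa only [hFρ] using hν_lim)

theorem cInt_indicator_simpleFunc_eq_cInt_xCorr (hν : ConcOn ν (Ico 0 1))
    (hρ : IsXConv μ ν ρ) (φ : SimpleFunc ℝ ℂ) :
    cInt ρ ((Ico 0 1).indicator φ) = cInt ν (xCorr μ ((Ico 0 1).indicator φ)) := by
  induction φ using SimpleFunc.induction with
  | @const c E hE =>
    have : (Ico 0 1).indicator (SimpleFunc.piecewise E hE (.const ℝ c) (.const ℝ 0)) =
        (Ico 0 1 ∩ E).indicator fun _ => c := by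
      ext x
      by_cases hxA : x ∈ Ico (0 : ℝ) 1 <;> by_cases hxE : x ∈ E <;> simp [hxA, hxE]
    rw [this]
    exact cInt_indicator_const_eq_cInt_xCorr hρ (measurableSet_Ico.inter hE)
      inter_subset_left c
  | @add φ ψ _ hφ hψ =>
    obtain ⟨Cφ, hCφ⟩ := φ.exists_forall_norm_le
    obtain ⟨Cψ, hCψ⟩ := ψ.exists_forall_norm_le
    rw [SimpleFunc.coe_add, indicator_add']
    exact cInt_add_eq_cInt_xCorr (C := max Cφ Cψ) hν (φ.measurable.indicator measurableSet_Ico)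
      (fun x => (norm_indicator_le_norm_self _ x).trans ((hCφ x).trans (le_max_left _ _)))
      (ψ.measurable.indicator measurableSet_Ico)
      (fun x => (norm_indicator_le_norm_self _ x).trans ((hCψ x).trans (le_max_right _ _))) hφ hψ

theorem cInt_indicator_eq_cInt_xCorr (hν : ConcOn ν (Ico 0 1)) (hρ : IsXConv μ ν ρ)
    {f : ℝ → ℂ} (hf : Measurable ((Ico 0 1).indicator f))
    (hfC : ∀ x, ‖(Ico 0 1).indicator f x‖ ≤ C) :
    cInt ρ ((Ico 0 1).indicator f) = cInt ν (xCorr μ ((Ico 0 1).indicator f)) := by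
  have hC : 0 ≤ C := (norm_nonneg _).trans (hfC 0)
  set φ := hf.stronglyMeasurable.approxBounded C
  refine cInt_eq_cInt_xCorr_of_tendsto hν (C := C) (F := fun n => (Ico 0 1).indicator (φ n))
    (fun n => (φ n).measurable.indicator measurableSet_Ico)
    (fun n x => (norm_indicator_le_norm_self _ x).trans
      (hf.stronglyMeasurable.norm_approxBounded_le hC n x))
    (fun x => ?_) (fun n => cInt_indicator_simpleFunc_eq_cInt_xCorr hν hρ (φ n))
  by_cases hx : x ∈ Ico 0 1
  · simpa only [indicator_of_mem hx] using
      hf.stronglyMeasurable.tendsto_approxBounded_of_norm_le (hfC x)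
  · simp only [indicator_of_notMem hx, tendsto_const_nhds]

end Adjoint

theorem ContinuousOn.measurable_indicator_Ico {h : ℝ → ℂ} (hcont : ContinuousOn h (Icc 0 1)) :
    Measurable ((Ico 0 1).indicator h) := by
  classical
  rw [← piecewise_eq_indicator]
  exact (hcont.mono Ico_subset_Icc_self).measurable_piecewise continuousOn_const measurableSet_Ico

theorem ContinuousOn.exists_norm_indicator_Ico_le {h : ℝ → ℂ}
    (hcont : ContinuousOn h (Icc 0 1)) : ∃ C, ∀ x, ‖(Ico 0 1).indicator h x‖ ≤ C := by
  obtain ⟨C, hC⟩ := isCompact_Icc.exists_bound_of_continuousOn hcont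
  refine ⟨max C 0, fun x => ?_⟩
  by_cases hx : x ∈ Ico 0 1
  · rw [indicator_of_mem hx]
    exact (hC x (Ico_subset_Icc_self hx)).trans (le_max_left _ _)
  · rw [indicator_of_notMem hx, norm_zero]
    exact le_max_right _ _

theorem ContinuousOn.continuousOn_Ici_indicator_Ico {h : ℝ → ℂ}
    (hcont : ContinuousOn h (Icc 0 1)) (h1 : h 1 = 0) :
    ContinuousOn ((Ico 0 1).indicator h) (Ici 0) := by
  have hIio : {x : ℝ | x < 1} = Iio 1 := rfl
  refine (ContinuousOn.if (p := fun x : ℝ => x < 1) (f := h) (g := fun _ => 0) ?_ ?_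
    continuousOn_const).congr fun x hx => ?_
  · rintro a ⟨-, ha⟩
    rw [hIio, frontier_Iio, mem_singleton_iff] at ha
    rw [ha, h1]
  · rw [hIio, closure_Iio, Ici_inter_Iic]
    exact hcont
  · simp [indicator_apply, mem_Ici.1 hx]

theorem continuousOn_xCorr {μ : ComplexMeasure ℝ} (hμ : ConcOn μ (Ico 0 1)) {g : ℝ → ℂ} {C : ℝ}
    (hg : Measurable g) (hgC : ∀ x, ‖g x‖ ≤ C) (hgc : ContinuousOn g (Ici 0)) :
    ContinuousOn (xCorr μ g) (Ici 0) := by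
  intro t₀ ht₀
  refine Complex.continuous_ofReal.continuousWithinAt.mul <| tendsto_cInt_of_dominated C
    (.of_forall fun t => (hg.comp (measurable_const_add t)).aestronglyMeasurable)
    (.of_forall fun t => ae_of_all _ fun s => hgC _)
    ((hμ.ae_mem measurableSet_Ico).mono fun s hs => ?_)
  have hmaps : MapsTo (· + s) (Ici (0 : ℝ)) (Ici 0) := fun t ht => add_nonneg ht hs.1
  exact (hgc _ (hmaps ht₀)).comp (f := (· + s)) (continuous_add_const s).continuousWithinAt hmaps

def Tμ (μ : ComplexMeasure ℝ) (h : ℝ → ℂ) (t : ℝ) : ℂ :=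
  t * cInt (μ.restrict (Ico 0 (1 - t))) fun s => h (t + s)

theorem Tμ_one (μ : ComplexMeasure ℝ) (h : ℝ → ℂ) : Tμ μ h 1 = 0 := by
  rw [Tμ, sub_self, Ico_self, cInt_restrict μ MeasurableSet.empty, indicator_empty]
  simp [cInt]

theorem Tμ_eq_xCorr {μ : ComplexMeasure ℝ} (hμ : ConcOn μ (Ico 0 1)) (h : ℝ → ℂ) {t : ℝ}
    (ht : 0 ≤ t) : Tμ μ h t = xCorr μ ((Ico 0 1).indicator h) t := by
  rw [Tμ, xCorr, cInt_restrict μ measurableSet_Ico]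
  congr 1
  refine cInt_congr_ae ((hμ.ae_mem measurableSet_Ico).mono fun s hs => ?_)
  show (Ico 0 (1 - t)).indicator (fun s => h (t + s)) s = (Ico 0 1).indicator h (t + s)
  by_cases hts : t + s < 1
  · rw [indicator_of_mem (mem_Ico.2 ⟨hs.1, by linarith⟩),
      indicator_of_mem (mem_Ico.2 ⟨by linarith [hs.1], hts⟩)]
  · rw [indicator_of_notMem fun (hs' : s ∈ Ico 0 (1 - t)) => hts (by linarith [hs'.2]),
      indicator_of_notMem fun (hts' : t + s ∈ Ico 0 1) => hts hts'.2]

theorem continuousOn_Tμ {μ : ComplexMeasure ℝ} (hμ : ConcOn μ (Ico 0 1)) {h : ℝ → ℂ}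
    (hcont : ContinuousOn h (Icc 0 1)) (h1 : h 1 = 0) : ContinuousOn (Tμ μ h) (Icc 0 1) := by
  obtain ⟨C, hC⟩ := hcont.exists_norm_indicator_Ico_le
  refine ((continuousOn_xCorr hμ hcont.measurable_indicator_Ico hC
    (hcont.continuousOn_Ici_indicator_Ico h1)).mono Icc_subset_Ici_self).congr fun t ht => ?_
  exact Tμ_eq_xCorr hμ h ht.1

theorem cInt_eq_cInt_Tμ {μ ν ρ : ComplexMeasure ℝ} (hμ : ConcOn μ (Ico 0 1))
    (hν : ConcOn ν (Ico 0 1)) (hρ : IsXConv μ ν ρ) {h : ℝ → ℂ}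
    (hcont : ContinuousOn h (Icc 0 1)) : cInt ρ h = cInt ν (Tμ μ h) := by
  obtain ⟨C, hC⟩ := hcont.exists_norm_indicator_Ico_le
  calc cInt ρ h = cInt ρ ((Ico 0 1).indicator h) :=
        cInt_congr_ae ((hρ.1.ae_mem measurableSet_Ico).mono fun _ hx => (indicator_of_mem hx h).symm)
    _ = cInt ν (xCorr μ ((Ico 0 1).indicator h)) :=
        cInt_indicator_eq_cInt_xCorr hν hρ hcont.measurable_indicator_Ico hC
    _ = cInt ν (Tμ μ h) :=
        cInt_congr_ae ((hν.ae_mem measurableSet_Ico).mono fun t ht => (Tμ_eq_xCorr hμ h ht.1).symm)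

theorem Dbar_adjoint_and_weak_star_continuous_general (μ : ComplexMeasure ℝ)
    (hμc : ConcOn μ (Ico 0 1)) :
    -- the adjoint identity ⟨h, D̄_μ ν⟩ = ⟨T_μ h, ν⟩
    (∀ ν ρ : ComplexMeasure ℝ, ConcOn ν (Ico 0 1) → IsXConv μ ν ρ →
      ∀ h : ℝ → ℂ, ContinuousOn h (Icc 0 1) → h 1 = 0 →
        cInt ρ h =
          cInt ν fun t => (t : ℂ) *
            cInt (μ.restrict (Ico 0 (1 - t))) fun s => h (t + s)) ∧
    -- weak-star continuity of D̄_μ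
    (∀ {ι : Type} (l : Filter ι) (ν : ι → ComplexMeasure ℝ) (ν₀ : ComplexMeasure ℝ)
        (ρ : ι → ComplexMeasure ℝ) (ρ₀ : ComplexMeasure ℝ),
      (∀ i, ConcOn (ν i) (Ico 0 1)) → ConcOn ν₀ (Ico 0 1) →
      (∀ i, IsXConv μ (ν i) (ρ i)) → IsXConv μ ν₀ ρ₀ →
      (∀ h : ℝ → ℂ, ContinuousOn h (Icc 0 1) → h 1 = 0 →
        Tendsto (fun i => cInt (ν i) h) l (nhds (cInt ν₀ h))) →
      ∀ h : ℝ → ℂ, ContinuousOn h (Icc 0 1) → h 1 = 0 →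
        Tendsto (fun i => cInt (ρ i) h) l (nhds (cInt ρ₀ h))) := by
  refine ⟨fun ν ρ hν hρ h hcont _ => cInt_eq_cInt_Tμ hμc hν hρ hcont, ?_⟩
  intro ι l ν ν₀ ρ ρ₀ hν hν₀ hρ hρ₀ hν_lim h hcont h1
  simp only [cInt_eq_cInt_Tμ hμc (hν _) (hρ _) hcont, cInt_eq_cInt_Tμ hμc hν₀ hρ₀ hcont]
  exact hν_lim _ (continuousOn_Tμ hμc hcont h1) (Tμ_one μ h)

/-- Let `μ` be a finite complex Borel measure on `[0,1)` with
`t |μ|([0,1-t))` bounded as `t → 0⁺`. Then the derivation `D̄_μ ν = (Xν) * μ` on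
`M[0,1)` is the adjoint of `T_μ : C₀[0,1) → C₀[0,1)`,
`(T_μ h)(t) = t ∫_{[0,1-t)} h(t+s) dμ(s)`, i.e. `⟨h, D̄_μ ν⟩ = ⟨T_μ h, ν⟩`; in
particular `D̄_μ` is weak-star continuous on `M[0,1) = C₀[0,1)*` (it is continuous
along every net that converges weak-star, i.e. tested against all `h ∈ C₀[0,1)`). -/
theorem Dbar_adjoint_and_weak_star_continuous (μ : ComplexMeasure ℝ)
    (hμc : ConcOn μ (Ico 0 1))
    (hμb : ∃ C δ : ℝ, 0 < δ ∧ ∀ t : ℝ, 0 < t → t < δ →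
      t * (cTV μ (Ico 0 (1 - t))).toReal ≤ C) :
    -- the adjoint identity ⟨h, D̄_μ ν⟩ = ⟨T_μ h, ν⟩
    (∀ ν ρ : ComplexMeasure ℝ, ConcOn ν (Ico 0 1) → IsXConv μ ν ρ →
      ∀ h : ℝ → ℂ, ContinuousOn h (Icc 0 1) → h 1 = 0 →
        cInt ρ h =
          cInt ν fun t => (t : ℂ) *
            cInt (μ.restrict (Ico 0 (1 - t))) fun s => h (t + s)) ∧
    -- weak-star continuity of D̄_μ
    (∀ {ι : Type} (l : Filter ι) (ν : ι → ComplexMeasure ℝ) (ν₀ : ComplexMeasure ℝ)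
        (ρ : ι → ComplexMeasure ℝ) (ρ₀ : ComplexMeasure ℝ),
      (∀ i, ConcOn (ν i) (Ico 0 1)) → ConcOn ν₀ (Ico 0 1) →
      (∀ i, IsXConv μ (ν i) (ρ i)) → IsXConv μ ν₀ ρ₀ →
      (∀ h : ℝ → ℂ, ContinuousOn h (Icc 0 1) → h 1 = 0 →
        Tendsto (fun i => cInt (ν i) h) l (nhds (cInt ν₀ h))) →
      ∀ h : ℝ → ℂ, ContinuousOn h (Icc 0 1) → h 1 = 0 →
        Tendsto (fun i => cInt (ρ i) h) l (nhds (cInt ρ₀ h))) :=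
  Dbar_adjoint_and_weak_star_continuous_general μ hμc
end
end

section
/- If T is a weakly compact continuous linear operator on L¹_loc(ℝ⁺), then T is not injective unless T = 0; consequently, since every nonzero derivation D_μ f = (Xf)*μ (μ ∈ M_loc, μ ≠ 0) on L¹_loc is injective, there are no nonzero weakly compact derivations on L¹_loc. -/
/-!
A `0`-neighbourhood `U` contains, for some `N`, every `F` vanishing on `[0, N)` together with all
its multiples. When `T '' U` has compact weak closure, every continuous functional `φ` is bounded on
`T '' U ⊇ ℂ • T F`, so `φ (T F) = 0` and hence `T F = 0`: `T` factors through restriction to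
`[0, N)`.

For `T = D_μ`, test with `G = 1_{[a, b)} / t` for `N < a`: then `X G = 1_{[a, b)}` while
`D_μ G = 0`, and by Fubini `u ↦ μ (u - b, u - a]` vanishes almost everywhere. A single `u` that
is good for all rational `a, b` shows that `μ` vanishes on a π-system of intervals generating the
Borel sets of `[0, n)`, so `μ = 0` and then `D_μ = 0`.
-/

open MeasureTheory Set Filter Topology

noncomputable section

/-- The Banach space `L¹[0,n)`. -/
abbrev LpIco (n : ℕ) := Lp ℂ 1 (volume.restrict (Ico (0 : ℝ) (n : ℝ)))

/-- `L¹_loc(ℝ⁺)`, realized as the (projective limit) submodule of compatible families in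
`Π n, L¹[0,n)`; the `n`-th component plays the role of the restriction `R_n f`. -/
def L1locSub : Submodule ℂ (Π n : ℕ, LpIco n) where
  carrier := {F | ∀ n : ℕ,
    (F n : ℝ → ℂ) =ᵐ[volume.restrict (Ico (0 : ℝ) (n : ℝ))] (F (n + 1) : ℝ → ℂ)}
  add_mem' := by
    intro F G hF hG n
    have hsub : Ico (0 : ℝ) (n : ℝ) ⊆ Ico (0 : ℝ) ((n : ℕ) + 1 : ℕ) := by
      apply Ico_subset_Ico_right; exact_mod_cast Nat.le_succ n
    have h2 := (Lp.coeFn_add (F (n + 1)) (G (n + 1))).filter_mono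
      (ae_mono (Measure.restrict_mono hsub le_rfl))
    filter_upwards [hF n, hG n, Lp.coeFn_add (F n) (G n), h2] with t h1 h1' h3 h4
    show ((F n + G n : LpIco n) : ℝ → ℂ) t = ((F (n+1) + G (n+1) : LpIco (n+1)) : ℝ → ℂ) t
    rw [h3, h4]; simp [h1, h1']
  zero_mem' := by
    intro n
    have hsub : Ico (0 : ℝ) (n : ℝ) ⊆ Ico (0 : ℝ) ((n : ℕ) + 1 : ℕ) := by
      apply Ico_subset_Ico_right; exact_mod_cast Nat.le_succ n
    have h2 := (Lp.coeFn_zero ℂ 1 (volume.restrict (Ico (0 : ℝ) ((n + 1 : ℕ) : ℝ)))).filter_mono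
      (ae_mono (Measure.restrict_mono hsub le_rfl))
    filter_upwards [Lp.coeFn_zero ℂ 1 (volume.restrict (Ico (0 : ℝ) (n : ℝ))), h2] with t h1 h3
    show ((0 : LpIco n) : ℝ → ℂ) t = ((0 : LpIco (n+1)) : ℝ → ℂ) t
    rw [h1, h3]
  smul_mem' := by
    intro c F hF n
    have hsub : Ico (0 : ℝ) (n : ℝ) ⊆ Ico (0 : ℝ) ((n : ℕ) + 1 : ℕ) := by
      apply Ico_subset_Ico_right; exact_mod_cast Nat.le_succ n
    have h2 := (Lp.coeFn_smul c (F (n + 1))).filter_mono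
      (ae_mono (Measure.restrict_mono hsub le_rfl))
    filter_upwards [hF n, Lp.coeFn_smul c (F n), h2] with t h1 h3 h4
    show ((c • F n : LpIco n) : ℝ → ℂ) t = ((c • F (n+1) : LpIco (n+1)) : ℝ → ℂ) t
    rw [h3, h4]; simp [h1]

/-- `L¹_loc(ℝ⁺)` as a type. -/
abbrev L1loc := ↥L1locSub

/-- The Fréchet (projective limit) topology on `L¹_loc`, given by the seminorms
`f ↦ ‖R_n f‖_{L¹[0,n)}`. -/
instance L1locTop : TopologicalSpace L1loc :=
  ⨅ n : ℕ, TopologicalSpace.induced (fun F : L1loc => F.1 n) inferInstance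

/-- The weak topology `σ(L¹_loc, (L¹_loc)*)` on `L¹_loc`. -/
def L1locWeak : TopologicalSpace L1loc :=
  ⨅ (φ : L1loc →ₗ[ℂ] ℂ) (_ : Continuous φ), TopologicalSpace.induced (⇑φ) inferInstance

namespace MeasureTheory

theorem VectorMeasure.apply_eq_zero_of_forall_Ioc_of_dense {α M : Type*} [TopologicalSpace α]
    [LinearOrder α] [OrderTopology α] [SecondCountableTopology α] [DenselyOrdered α]
    [NoMaxOrder α] [MeasurableSpace α] [BorelSpace α] [AddCommGroup M] [TopologicalSpace M]
    [T2Space M] (v : VectorMeasure α M) {D : Set α} (hD : Dense D) {p q : α} (hp : p ∈ D)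
    (hq : q ∈ D) (h : ∀ l ∈ D, ∀ r ∈ D, p ≤ l → l < r → r ≤ q → v (Ioc l r) = 0)
    {E : Set α} (hE : MeasurableSet E) (hEpq : E ⊆ Ioc p q) : v E = 0 := by
  have h' : ∀ l ∈ D, ∀ r ∈ D, p ≤ l → r ≤ q → v (Ioc l r) = 0 := fun l hl r hr hpl hrq =>
    (lt_or_ge l r).elim (h l hl r hr hpl · hrq) fun hrl => by rw [Ioc_eq_empty hrl.not_gt]; simp
  have hres : v.restrict (Ioc p q) = 0 := by
    refine VectorMeasure.ext_of_generateFrom _ ?_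
      (BorelSpace.measurable_eq.trans hD.borel_eq_generateFrom_Ioc_mem) (isPiSystem_Ioc_mem D D)
      (by simpa using h' p hp q hq le_rfl le_rfl)
    rintro - ⟨l, hl, r, hr, -, rfl⟩
    rw [VectorMeasure.restrict_apply _ measurableSet_Ioc measurableSet_Ioc, Ioc_inter_Ioc]
    exact h' _ (sup_ind l p hl hp) _ (inf_ind r q hr hq) le_sup_right inf_le_right
  rw [← inter_eq_left.2 hEpq, ← VectorMeasure.restrict_apply _ measurableSet_Ioc hE, hres]
  rfl

theorem ComplexMeasure.apply_eq_jordanDecomposition {α : Type*} [MeasurableSpace α]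
    (c : ComplexMeasure α) {E : Set α} (hE : MeasurableSet E) :
    c E = ((c.re.toJordanDecomposition.posPart.real E -
        c.re.toJordanDecomposition.negPart.real E : ℝ) : ℂ) +
      Complex.I * ((c.im.toJordanDecomposition.posPart.real E -
        c.im.toJordanDecomposition.negPart.real E : ℝ) : ℂ) := by
  rw [← c.re.apply_eq_posPart_real_sub_negPart_real hE,
    ← c.im.apply_eq_posPart_real_sub_negPart_real hE, mul_comm]
  exact (Complex.re_add_im (c E)).symm

theorem measurable_measureReal_Ioc_sub (ν : Measure ℝ) [SFinite ν] (a b : ℝ) :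
    Measurable fun u => ν.real (Ioc (u - b) (u - a)) :=
  (measurable_measure_prodMk_left (ν := ν)
    ((measurableSet_lt (measurable_fst.sub_const b) measurable_snd).inter
      (measurableSet_le measurable_snd (measurable_fst.sub_const a)))).ennreal_toReal

theorem ComplexMeasure.measurable_apply_Ioc_sub (c : ComplexMeasure ℝ) (a b : ℝ) :
    Measurable fun u => c (Ioc (u - b) (u - a)) := by
  simp only [c.apply_eq_jordanDecomposition measurableSet_Ioc]
  have h := fun (ν : Measure ℝ) [IsFiniteMeasure ν] => measurable_measureReal_Ioc_sub ν a b
  exact (Complex.measurable_ofReal.comp ((h _).sub (h _))).add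
    (measurable_const.mul (Complex.measurable_ofReal.comp ((h _).sub (h _))))

theorem integral_setIntegral_Ico_add (ν : Measure ℝ) [IsFiniteMeasure ν] {g : ℝ → ℂ}
    (hg : Integrable g) (a b : ℝ) :
    ∫ s, (∫ t in Ico a b, g (t + s)) ∂ν = ∫ u, ν.real (Ioc (u - b) (u - a)) • g u := by
  set S : Set (ℝ × ℝ) := {p | p.1 ∈ Ioc (p.2 - b) (p.2 - a)}
  have hS : MeasurableSet S :=
    (measurableSet_lt (measurable_snd.sub_const b) measurable_fst).inter
      (measurableSet_le measurable_fst (measurable_snd.sub_const a))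
  have hmem : ∀ s u : ℝ, u - s ∈ Ico a b ↔ s ∈ Ioc (u - b) (u - a) := fun s u => by
    simp only [mem_Ico, mem_Ioc]; constructor <;> rintro ⟨h₁, h₂⟩ <;> constructor <;> linarith
  calc ∫ s, (∫ t in Ico a b, g (t + s)) ∂ν
      = ∫ s, (∫ u, S.indicator (fun p => g p.2) (s, u)) ∂ν := by
        refine integral_congr_ae (.of_forall fun s => ?_)
        dsimp only
        rw [← integral_indicator measurableSet_Ico,
          ← integral_sub_right_eq_self _ s]
        congr 1 with u
        simp only [indicator_apply, hmem, sub_add_cancel]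
        rfl
    _ = ∫ u, ∫ s, S.indicator (fun p => g p.2) (s, u) ∂ν :=
        integral_integral_swap (f := fun s u => S.indicator (fun p => g p.2) (s, u))
          ((hg.comp_snd ν).indicator hS)
    _ = ∫ u, ν.real (Ioc (u - b) (u - a)) • g u := by
        refine integral_congr_ae (.of_forall fun u => ?_)
        exact integral_indicator_const (g u) (measurableSet_Ioc (a := u - b) (b := u - a))

theorem cInt_setIntegral_Ico_add (c : ComplexMeasure ℝ) {g : ℝ → ℂ} (hg : Integrable g)
    (a b : ℝ) :
    cInt c (fun s => ∫ t in Ico a b, g (t + s)) = ∫ u, g u * c (Ioc (u - b) (u - a)) := by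
  have hint : ∀ (ν : Measure ℝ) [IsFiniteMeasure ν],
      Integrable fun u => ν.real (Ioc (u - b) (u - a)) • g u := fun ν _ =>
    hg.bdd_smul (ν.real univ) (measurable_measureReal_Ioc_sub ν a b).aestronglyMeasurable
      (.of_forall fun u => by
        rw [Real.norm_of_nonneg measureReal_nonneg]; exact measureReal_mono (subset_univ _))
  simp only [cInt, integral_setIntegral_Ico_add _ hg]
  rw [← integral_sub (hint _) (hint _), ← integral_sub (hint _) (hint _), ← integral_const_mul,
    ← integral_add ((hint _).sub' (hint _)) (((hint _).sub' (hint _)).const_mul _)]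
  refine integral_congr_ae (.of_forall fun u => ?_)
  simp only [c.apply_eq_jordanDecomposition measurableSet_Ioc, Complex.real_smul]
  push_cast
  ring

theorem cInt_zero_measure {X : Type} [MeasurableSpace X] (f : X → ℂ) : cInt 0 f = 0 := by
  simp only [cInt, map_zero, SignedMeasure.toJordanDecomposition_zero,
    JordanDecomposition.zero_posPart, JordanDecomposition.zero_negPart, integral_zero_measure]
  simp

theorem ae_eq_zero_of_forall_integral_mul_eq_zero {α : Type*} [MeasurableSpace α]
    {μ : Measure α} {s : Set α} (hs : MeasurableSet s) {f : α → ℂ}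
    (hf : Integrable f (μ.restrict s))
    (h : ∀ g : α → ℂ, Measurable g → (∃ C : ℝ, ∀ t, ‖g t‖ ≤ C) → (∀ t, t ∉ s → g t = 0) →
      ∫ t, g t * f t ∂(μ.restrict s) = 0) :
    f =ᵐ[μ.restrict s] 0 := by
  refine hf.ae_eq_zero_of_forall_setIntegral_eq_zero fun t ht _ => ?_
  have hind := h ((t ∩ s).indicator 1) (measurable_one.indicator (ht.inter hs))
    ⟨1, fun x => by by_cases hx : x ∈ t ∩ s <;> simp [hx]⟩
    (fun x hx => indicator_of_notMem (fun hx' => hx hx'.2) _)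
  have hts : ∀ x, (t ∩ s).indicator 1 x * f x = (t ∩ s).indicator f x := fun x => by
    by_cases hx : x ∈ t ∩ s <;> simp [hx]
  simp only [hts, setIntegral_indicator (ht.inter hs)] at hind
  rw [Measure.restrict_restrict ht]
  rwa [inter_comm s, inter_assoc, inter_self] at hind

end MeasureTheory

theorem monotone_ae_restrict_Ico_zero :
    Monotone fun n : ℕ => ae (volume.restrict (Ico (0 : ℝ) n)) := fun _ _ h =>
  ae_mono (Measure.restrict_mono (Ico_subset_Ico_right (by exact_mod_cast h)) le_rfl)

namespace L1loc

theorem continuous_eval (n : ℕ) : Continuous fun F : L1loc => F.1 n :=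
  continuous_iInf_dom continuous_induced_dom

theorem coeFn_eval_ae_eq_of_le (F : L1loc) {n m : ℕ} (h : n ≤ m) :
    (F.1 n : ℝ → ℂ) =ᵐ[volume.restrict (Ico (0 : ℝ) n)] F.1 m := by
  induction m, h using Nat.le_induction with
  | base => rfl
  | succ m hnm ih => exact ih.trans ((F.2 m).filter_mono (monotone_ae_restrict_Ico_zero hnm))

theorem eval_eq_zero_of_le {F : L1loc} {n N : ℕ} (hF : F.1 N = 0) (h : n ≤ N) : F.1 n = 0 :=
  Lp.eq_zero_iff_ae_eq_zero.2 <| (coeFn_eval_ae_eq_of_le F h).trans <|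
    (Lp.eq_zero_iff_ae_eq_zero.1 hF).filter_mono (monotone_ae_restrict_Ico_zero h)

theorem exists_forall_eval_eq_zero_mem {U : Set L1loc} (hU : U ∈ 𝓝 0) :
    ∃ N : ℕ, ∀ F : L1loc, F.1 N = 0 → F ∈ U := by
  have h𝓝 : 𝓝 (0 : L1loc) = ⨅ n : ℕ, comap (fun F : L1loc => F.1 n) (𝓝 0) := by
    simp only [nhds_iInf, nhds_induced]
    rfl
  rw [h𝓝, mem_iInf_finite] at hU
  obtain ⟨t, ht⟩ := hU
  refine ⟨t.sup id, fun F hF => ?_⟩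
  have hle : 𝓟 {F : L1loc | F.1 (t.sup id) = 0} ≤
      ⨅ n ∈ t, comap (fun F : L1loc => F.1 n) (𝓝 0) :=
    le_iInf₂ fun n hn _ ⟨V, hV, hVs⟩ G hG =>
      hVs (show G.1 n ∈ V by
        rw [eval_eq_zero_of_le (n := n) hG (Finset.le_sup (f := id) hn)]; exact mem_of_mem_nhds hV)
  exact hle ht hF

theorem eq_zero_of_forall_continuous_eq_zero {F : L1loc}
    (h : ∀ φ : L1loc →ₗ[ℂ] ℂ, Continuous φ → φ F = 0) : F = 0 :=
  Subtype.ext <| funext fun n => SeparatingDual.eq_zero_of_forall_dual_eq_zero (R := ℂ) fun ψ =>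
    h (ψ.toLinearMap ∘ₗ LinearMap.proj n ∘ₗ L1locSub.subtype)
      (ψ.continuous.comp (continuous_eval n))

def mk (f : ℝ → ℂ) (hf : ∀ n : ℕ, IntegrableOn f (Ico 0 (n : ℝ))) : L1loc :=
  ⟨fun n => (hf n).toL1 f, fun n =>
    (Integrable.coeFn_toL1 _).trans
      ((Integrable.coeFn_toL1 _).filter_mono (monotone_ae_restrict_Ico_zero n.le_succ)).symm⟩

theorem coeFn_mk_eval (f : ℝ → ℂ) (hf : ∀ n : ℕ, IntegrableOn f (Ico 0 (n : ℝ))) (n : ℕ) :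
    ((mk f hf).1 n : ℝ → ℂ) =ᵐ[volume.restrict (Ico (0 : ℝ) n)] f :=
  (hf n).coeFn_toL1

end L1loc

theorem exists_forall_eval_eq_zero_apply_eq_zero (T : L1loc →ₗ[ℂ] L1loc)
    (hw : ∃ U ∈ 𝓝 (0 : L1loc), IsCompact (@closure _ L1locWeak (⇑T '' U))) :
    ∃ N : ℕ, ∀ F : L1loc, F.1 N = 0 → T F = 0 := by
  obtain ⟨U, hU, hK⟩ := hw
  obtain ⟨N, hN⟩ := L1loc.exists_forall_eval_eq_zero_mem hU
  refine ⟨N, fun F hF => L1loc.eq_zero_of_forall_continuous_eq_zero fun φ hφ => ?_⟩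
  have hmem : ∀ c : ℂ, c * φ (T F) ∈ φ '' @closure _ L1locWeak (⇑T '' U) := fun c =>
    ⟨c • T F, @subset_closure _ L1locWeak _ _
      (⟨c • F, hN _ (by simp [hF]), map_smul T c F⟩ : c • T F ∈ T '' U), by simp⟩
  obtain ⟨R, hR⟩ := (hK.image hφ).isBounded.subset_closedBall 0
  by_contra hne
  have hRlt := hR (hmem (((|R| + 1 : ℝ) : ℂ) * (φ (T F))⁻¹))
  rw [inv_mul_cancel_right₀ hne, Metric.mem_closedBall, dist_zero_right, Complex.norm_real,
    Real.norm_of_nonneg (by positivity)] at hRlt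
  linarith [le_abs_self R]

/-- `T F = (X F) * μ`, tested on `[0, n)` against bounded measurable `g` supported there. -/
def IsXConvOperator (T : L1loc →ₗ[ℂ] L1loc) (μ : ℕ → ComplexMeasure ℝ) : Prop :=
  ∀ (F : L1loc) (n : ℕ) (g : ℝ → ℂ), Measurable g →
    (∃ C : ℝ, ∀ t, ‖g t‖ ≤ C) → (∀ t : ℝ, t ∉ Ico (0 : ℝ) (n : ℝ) → g t = 0) →
    (∫ t, g t * ((T F).1 n : ℝ → ℂ) t ∂(volume.restrict (Ico (0 : ℝ) (n : ℝ)))) =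
      cInt (μ n) fun s =>
        ∫ t, g (t + s) * ((t : ℂ) * ((F.1 n : ℝ → ℂ) t))
          ∂(volume.restrict (Ico (0 : ℝ) (n : ℝ)))

namespace IsXConvOperator

variable {T : L1loc →ₗ[ℂ] L1loc} {μ : ℕ → ComplexMeasure ℝ}

theorem cInt_setIntegral_Ico_add_eq_zero (hder : IsXConvOperator T μ) {N : ℕ}
    (hN : ∀ F : L1loc, F.1 N = 0 → T F = 0) {m : ℕ} {a b : ℝ} (hNa : (N : ℝ) < a)
    (hbm : b ≤ m) {g : ℝ → ℂ} (hg : Measurable g) (hgb : ∃ C : ℝ, ∀ t, ‖g t‖ ≤ C)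
    (hgs : ∀ t, t ∉ Ico (0 : ℝ) m → g t = 0) :
    cInt (μ m) (fun s => ∫ t in Ico a b, g (t + s)) = 0 := by
  have ha : 0 < a := (Nat.cast_nonneg N).trans_lt hNa
  -- `G` vanishes on `[0, N)`, so `T G = 0`, while `X G = 1_{[a, b)}`.
  set G : ℝ → ℂ := (Ico a b).indicator fun t => (t : ℂ)⁻¹
  have hG : Integrable G := (integrable_indicator_iff measurableSet_Ico).2 <|
    ((Complex.continuous_ofReal.continuousOn.inv₀ fun t ht => by
      exact_mod_cast (ha.trans_le ht.1).ne').integrableOn_Icc).mono_set Ico_subset_Icc_self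
  set F := L1loc.mk G fun _ => hG.integrableOn
  have hTF : T F = 0 := hN F <| Lp.eq_zero_iff_ae_eq_zero.2 <| by
    filter_upwards [L1loc.coeFn_mk_eval G _ N, ae_restrict_mem measurableSet_Ico] with t ht htN
    rw [ht]
    exact indicator_of_notMem (fun h => by linarith [h.1, htN.2]) _
  have hXF : ∀ s, ∫ t in Ico 0 (m : ℝ), g (t + s) * ((t : ℂ) * (F.1 m : ℝ → ℂ) t) =
      ∫ t in Ico a b, g (t + s) := fun s => by
    calc _ = ∫ t in Ico 0 (m : ℝ), (Ico a b).indicator (fun t => g (t + s)) t := by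
          refine integral_congr_ae ?_
          filter_upwards [L1loc.coeFn_mk_eval G _ m] with t ht
          rw [ht]
          by_cases hab : t ∈ Ico a b
          · have ht0 : (t : ℂ) ≠ 0 := by exact_mod_cast (ha.trans_le hab.1).ne'
            simp [G, hab, mul_inv_cancel₀ ht0]
          · simp [G, hab]
      _ = _ := by
          rw [setIntegral_indicator measurableSet_Ico,
            inter_eq_right.2 (Ico_subset_Ico ha.le hbm)]
  calc cInt (μ m) (fun s => ∫ t in Ico a b, g (t + s))
      = cInt (μ m) (fun s => ∫ t in Ico 0 (m : ℝ), g (t + s) * ((t : ℂ) * (F.1 m : ℝ → ℂ) t)) := by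
        simp only [hXF]
    _ = ∫ t in Ico 0 (m : ℝ), g t * ((T F).1 m : ℝ → ℂ) t := (hder F m g hg hgb hgs).symm
    _ = 0 := by
        rw [hTF]
        show ∫ t in Ico 0 (m : ℝ), g t * ((0 : LpIco m) : ℝ → ℂ) t = 0
        refine (integral_congr_ae ?_).trans (integral_zero _ _)
        filter_upwards [Lp.coeFn_zero ℂ 1 (volume.restrict (Ico (0 : ℝ) m))] with t ht
        rw [ht, Pi.zero_apply, mul_zero]

theorem ae_apply_Ioc_sub_eq_zero (hder : IsXConvOperator T μ) {N : ℕ}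
    (hN : ∀ F : L1loc, F.1 N = 0 → T F = 0) {m : ℕ} {a b : ℝ} (hNa : (N : ℝ) < a)
    (hbm : b ≤ m) :
    ∀ᵐ u ∂(volume.restrict (Ico (0 : ℝ) m)), μ m (Ioc (u - b) (u - a)) = 0 := by
  refine ae_eq_zero_of_forall_integral_mul_eq_zero measurableSet_Ico
    (.of_bound ((μ m).measurable_apply_Ioc_sub a b).aestronglyMeasurable (μ m).bound
      (.of_forall fun _ => VectorMeasure.norm_apply_le_bound)) fun g hg hgb hgs => ?_
  obtain ⟨C, hC⟩ := hgb
  have hgi : Integrable g := (integrableOn_iff_integrable_of_support_subset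
      fun t ht => by_contra fun h => ht (hgs t h)).1
    (Integrable.of_bound hg.aestronglyMeasurable C (.of_forall hC))
  rw [setIntegral_eq_integral_of_forall_compl_eq_zero fun u hu => by rw [hgs u hu, zero_mul],
    ← cInt_setIntegral_Ico_add _ hgi]
  exact hder.cInt_setIntegral_Ico_add_eq_zero hN hNa hbm hg ⟨C, hC⟩ hgs

theorem apply_eq_zero_of_subset_Ico (hder : IsXConvOperator T μ) {N : ℕ}
    (hN : ∀ F : L1loc, F.1 N = 0 → T F = 0) (n : ℕ) {E : Set ℝ} (hE : MeasurableSet E)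
    (hEn : E ⊆ Ico 0 (n : ℝ)) : μ (n + N + 2) E = 0 := by
  set m := n + N + 2
  have hae : ∀ᵐ u ∂(volume.restrict (Ico (0 : ℝ) m)), ∀ a b : ℚ, (N : ℝ) < a → (b : ℝ) ≤ m →
      μ m (Ioc (u - b) (u - a)) = 0 := by
    simp only [ae_all_iff, eventually_imp_distrib_left]
    exact fun a b hNa hbm => hder.ae_apply_Ioc_sub_eq_zero hN hNa hbm
  have hm : (m : ℝ) = n + N + 2 := by push_cast [m]; ring
  have : (ae (volume.restrict (Ico ((m : ℝ) - 1) m))).NeBot :=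
    ae_restrict_neBot.2 (by simp [Real.volume_Ico])
  have hsub : Ico ((m : ℝ) - 1) m ⊆ Ico 0 m := Ico_subset_Ico_left (by linarith)
  obtain ⟨u, hu, hgood⟩ :=
    ((ae_restrict_mem measurableSet_Ico).and (ae_restrict_of_ae_restrict_of_subset hsub hae)).exists
  refine VectorMeasure.apply_eq_zero_of_forall_Ioc_of_dense (μ m)
    (D := range fun q : ℚ => u - q) (p := u - m) (q := u - (N + 1)) ?_ ⟨m, by simp⟩
    ⟨N + 1, by simp⟩ ?_ hE ?_
  · exact ((Homeomorph.subLeft u).surjective.denseRange.comp Rat.denseRange_cast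
      (Homeomorph.subLeft u).continuous :)
  · rintro - ⟨b, rfl⟩ - ⟨a, rfl⟩ hpl - hrq
    exact hgood a b (by push_cast at hrq; linarith) (by push_cast at hpl; linarith)
  · intro x hx
    have := hEn hx
    simp only [mem_Ico, mem_Ioc] at this hu ⊢
    constructor <;> linarith

theorem measure_eq_zero (hconc : ∀ n : ℕ, ConcOn (μ n) (Ico 0 (n : ℝ)))
    (hcompat : ∀ (n : ℕ) (E : Set ℝ), MeasurableSet E → E ⊆ Ico (0 : ℝ) (n : ℝ) →
      μ (n + 1) E = μ n E)
    (hder : IsXConvOperator T μ) {N : ℕ} (hN : ∀ F : L1loc, F.1 N = 0 → T F = 0) (n : ℕ) :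
    μ n = 0 := by
  have hmono : ∀ m, n ≤ m → ∀ E, MeasurableSet E → E ⊆ Ico 0 (n : ℝ) → μ m E = μ n E := by
    intro m hnm
    induction m, hnm using Nat.le_induction with
    | base => exact fun _ _ _ => rfl
    | succ m hnm ih => exact fun E hE hEn => (hcompat m E hE
        (hEn.trans (Ico_subset_Ico_right (by exact_mod_cast hnm)))).trans (ih E hE hEn)
  ext E hE
  rw [← inter_union_sdiff E (Ico 0 (n : ℝ)), VectorMeasure.of_union disjoint_sdiff_inter.symm
      (hE.inter measurableSet_Ico) (hE.diff measurableSet_Ico),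
    hconc n _ (hE.diff measurableSet_Ico) fun _ hx => hx.2,
    ← hmono (n + N + 2) (by omega) _ (hE.inter measurableSet_Ico) inter_subset_right,
    hder.apply_eq_zero_of_subset_Ico hN n (hE.inter measurableSet_Ico) inter_subset_right]
  simp

theorem eq_zero_of_measure_eq_zero (hder : IsXConvOperator T μ) (hμ : ∀ n, μ n = 0) :
    T = 0 := by
  ext1 F
  refine Subtype.ext <| funext fun n => Lp.eq_zero_iff_ae_eq_zero.2 <|
    ae_eq_zero_of_forall_integral_mul_eq_zero measurableSet_Ico (L1.integrable_coeFn _)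
      fun g hg hgb hgs => ?_
  rw [hder F n g hg hgb hgs, hμ n, cInt_zero_measure]

end IsXConvOperator

theorem no_nonzero_weakly_compact_derivations_general (T : L1loc →ₗ[ℂ] L1loc)
    (hw : ∃ U ∈ nhds (0 : L1loc), IsCompact (@closure _ L1locWeak (⇑T '' U)))
    (μ : ℕ → ComplexMeasure ℝ)
    (hconc : ∀ n : ℕ, ConcOn (μ n) (Ico 0 (n : ℝ)))
    (hcompat : ∀ (n : ℕ) (E : Set ℝ), MeasurableSet E → E ⊆ Ico (0 : ℝ) (n : ℝ) →
      μ (n + 1) E = μ n E)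
    (hder : ∀ (F : L1loc) (n : ℕ) (g : ℝ → ℂ), Measurable g →
      (∃ C : ℝ, ∀ t, ‖g t‖ ≤ C) → (∀ t : ℝ, t ∉ Ico (0 : ℝ) (n : ℝ) → g t = 0) →
      (∫ t, g t * ((T F).1 n : ℝ → ℂ) t ∂(volume.restrict (Ico (0 : ℝ) (n : ℝ)))) =
        cInt (μ n) fun s =>
          ∫ t, g (t + s) * ((t : ℂ) * ((F.1 n : ℝ → ℂ) t))
            ∂(volume.restrict (Ico (0 : ℝ) (n : ℝ)))) :
    T = 0 := by
  obtain ⟨N, hN⟩ := exists_forall_eval_eq_zero_apply_eq_zero T hw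
  have hT : IsXConvOperator T μ := hder
  exact hT.eq_zero_of_measure_eq_zero (hT.measure_eq_zero hconc hcompat hN)

/-- There are no nonzero weakly compact derivations on `L¹_loc(ℝ⁺)`:
if `T` is a continuous linear operator on `L¹_loc` which is weakly compact and is a
derivation, i.e. `T = D_μ`, `D_μ f = (Xf) * μ`, for a locally finite complex Borel
measure `μ` on `ℝ⁺` (encoded as a compatible family `μ n = μ|_{[0,n)}`, the derivation
property being expressed by testing against bounded functions supported in `[0,n)`),
then `T = 0`. (In particular a weakly compact `T` is not injective unless `T = 0`.) -/
theorem no_nonzero_weakly_compact_derivations (T : L1loc →ₗ[ℂ] L1loc)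
    (hT : Continuous T)
    (hw : ∃ U ∈ nhds (0 : L1loc), IsCompact (@closure _ L1locWeak (⇑T '' U)))
    (μ : ℕ → ComplexMeasure ℝ)
    (hconc : ∀ n : ℕ, ConcOn (μ n) (Ico 0 (n : ℝ)))
    (hcompat : ∀ (n : ℕ) (E : Set ℝ), MeasurableSet E → E ⊆ Ico (0 : ℝ) (n : ℝ) →
      μ (n + 1) E = μ n E)
    (hder : ∀ (F : L1loc) (n : ℕ) (g : ℝ → ℂ), Measurable g →
      (∃ C : ℝ, ∀ t, ‖g t‖ ≤ C) → (∀ t : ℝ, t ∉ Ico (0 : ℝ) (n : ℝ) → g t = 0) →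
      (∫ t, g t * ((T F).1 n : ℝ → ℂ) t ∂(volume.restrict (Ico (0 : ℝ) (n : ℝ)))) =
        cInt (μ n) fun s =>
          ∫ t, g (t + s) * ((t : ℂ) * ((F.1 n : ℝ → ℂ) t))
            ∂(volume.restrict (Ico (0 : ℝ) (n : ℝ)))) :
    T = 0 :=
  no_nonzero_weakly_compact_derivations_general T hw μ hconc hcompat hder
end
end
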